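/- arXiv:1412.7523 — 7 statements merged into one kernel-verified Lean document; each statement's English description precedes it below -/
import Mathlib

section
/- Let γ ≠ 0 and F be real constants and let q : ℝ → ℝ satisfy q''(t) = F - 2γ q'(t). Then the function I₆(t) = F·log|(1/(2γ))(2γq'(t) - F)·exp(2γt)| - 2γ·(Ft - 2γq(t) - q'(t)) is constant on any interval where 2γq'(t) ≠ F. -/
/-! `I₆` is a function of `I₁` and `I₂`, and both of these are first integrals of
`q'' = F - 2γ q'`: along a solution, `((2γ q' - F) e^{2γt})' = 2γ (q'' - F + 2γ q') e^{2γt} = 0`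
and `(Ft - 2γ q - q')' = F - 2γ q' - q'' = 0`. -/

open Real

section LinearODE

variable {k c : ℝ} {q y : ℝ → ℝ}

theorem hasDerivAt_mul_exp_of_linear_ode (hy : ∀ t, HasDerivAt y (c - k * y t) t) (t : ℝ) :
    HasDerivAt (fun t => (k * y t - c) * exp (k * t)) 0 t := by
  have hexp : HasDerivAt (fun t => exp (k * t)) (exp (k * t) * k) t :=
    (hasDerivAt_exp _).comp t ((hasDerivAt_id t).const_mul k |>.congr_deriv (mul_one k))
  exact (((hy t).const_mul k).sub_const c).mul hexp |>.congr_deriv (by ring)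

theorem mul_exp_eq_of_linear_ode (hy : ∀ t, HasDerivAt y (c - k * y t) t) (s t : ℝ) :
    (k * y s - c) * exp (k * s) = (k * y t - c) * exp (k * t) :=
  is_const_of_deriv_eq_zero
    (fun t => (hasDerivAt_mul_exp_of_linear_ode hy t).differentiableAt)
    (fun t => (hasDerivAt_mul_exp_of_linear_ode hy t).deriv) s t

theorem hasDerivAt_sub_sub_of_linear_ode (hq : ∀ t, HasDerivAt q (y t) t)
    (hy : ∀ t, HasDerivAt y (c - k * y t) t) (t : ℝ) :
    HasDerivAt (fun t => c * t - k * q t - y t) 0 t :=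
  (((hasDerivAt_id t).const_mul c).sub ((hq t).const_mul k)).sub (hy t)
    |>.congr_deriv (by ring)

theorem sub_sub_eq_of_linear_ode (hq : ∀ t, HasDerivAt q (y t) t)
    (hy : ∀ t, HasDerivAt y (c - k * y t) t) (s t : ℝ) :
    c * s - k * q s - y s = c * t - k * q t - y t :=
  is_const_of_deriv_eq_zero
    (fun t => (hasDerivAt_sub_sub_of_linear_ode hq hy t).differentiableAt)
    (fun t => (hasDerivAt_sub_sub_of_linear_ode hq hy t).deriv) s t

end LinearODE

theorem I6_const_general (γ F : ℝ) (q q' : ℝ → ℝ)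
    (hq : ∀ t, HasDerivAt q (q' t) t)
    (hq' : ∀ t, HasDerivAt q' (F - 2 * γ * q' t) t)
    (a b : ℝ) :
    ∀ s ∈ Set.Icc a b, ∀ t ∈ Set.Icc a b,
      F * Real.log |(1 / (2 * γ)) * (2 * γ * q' s - F) * Real.exp (2 * γ * s)|
          - 2 * γ * (F * s - 2 * γ * q s - q' s) =
      F * Real.log |(1 / (2 * γ)) * (2 * γ * q' t - F) * Real.exp (2 * γ * t)|
          - 2 * γ * (F * t - 2 * γ * q t - q' t) := by
  intro s _ t _
  rw [mul_assoc (1 / (2 * γ)), mul_assoc (1 / (2 * γ)), mul_exp_eq_of_linear_ode hq' s t,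
    sub_sub_eq_of_linear_ode hq hq' s t]

/-- For damped motion under a constant force, on any interval where `2γ q' ≠ F`,
`I₆ = F log|I₁| - 2γ I₂` is constant. -/
theorem I6_const (γ F : ℝ) (hγ : γ ≠ 0) (q q' : ℝ → ℝ)
    (hq : ∀ t, HasDerivAt q (q' t) t)
    (hq' : ∀ t, HasDerivAt q' (F - 2 * γ * q' t) t)
    (a b : ℝ) (hne : ∀ t ∈ Set.Icc a b, 2 * γ * q' t ≠ F) :
    ∀ s ∈ Set.Icc a b, ∀ t ∈ Set.Icc a b,
      F * Real.log |(1 / (2 * γ)) * (2 * γ * q' s - F) * Real.exp (2 * γ * s)|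
          - 2 * γ * (F * s - 2 * γ * q s - q' s) =
      F * Real.log |(1 / (2 * γ)) * (2 * γ * q' t - F) * Real.exp (2 * γ * t)|
          - 2 * γ * (F * t - 2 * γ * q t - q' t) :=
  I6_const_general γ F q q' hq hq' a b
end

section
/- Let γ, F be real constants with γ ≠ 0 and let q : ℝ → ℝ satisfy q''(t) = F - 2γ q'(t). Suppose 2γ(Ft - 2γq(t) - q'(t)) + F ≠ 0 for all t in an interval J. Then I₇(t) = [(1/(2γ))(2γq'(t) - F)e^{2γt}] / [2γ(Ft - 2γq(t) - q'(t)) + F] is constant on J. -/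
/-!
Both `I₁ = (2γq̇ - F) e^{2γt} / (2γ)` and `I₂ = Ft - 2γq - q̇` have identically vanishing time
derivative along solutions of `q̈ = F - 2γq̇`, so they are constant on all of `ℝ`; hence so is any
function of them, in particular `I₇ = I₁ / (2γ I₂ + F)`.
-/

namespace DampedLinearMotion

variable (γ F : ℝ) (q q' : ℝ → ℝ)

noncomputable def I₁ (t : ℝ) : ℝ :=
  (1 / (2 * γ)) * (2 * γ * q' t - F) * Real.exp (2 * γ * t)

def I₂ (t : ℝ) : ℝ :=
  F * t - 2 * γ * q t - q' t

variable {γ F q q'}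

theorem hasDerivAt_I₁ (hq' : ∀ t, HasDerivAt q' (F - 2 * γ * q' t) t) (t : ℝ) :
    HasDerivAt (I₁ γ F q') 0 t := by
  have hexp : HasDerivAt (fun t => Real.exp (2 * γ * t)) (Real.exp (2 * γ * t) * (2 * γ)) t := by
    simpa using ((hasDerivAt_id t).const_mul (2 * γ)).exp
  refine ((((hq' t).const_mul (2 * γ)).sub_const F).const_mul (1 / (2 * γ)) |>.mul hexp).congr_deriv ?_
  ring

theorem hasDerivAt_I₂ (hq : ∀ t, HasDerivAt q (q' t) t)
    (hq' : ∀ t, HasDerivAt q' (F - 2 * γ * q' t) t) (t : ℝ) :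
    HasDerivAt (I₂ γ F q q') 0 t := by
  refine ((((hasDerivAt_id t).const_mul F).sub ((hq t).const_mul (2 * γ))).sub (hq' t)).congr_deriv ?_
  ring

theorem I₁_eq (hq' : ∀ t, HasDerivAt q' (F - 2 * γ * q' t) t) (s t : ℝ) :
    I₁ γ F q' s = I₁ γ F q' t :=
  is_const_of_deriv_eq_zero (fun t => (hasDerivAt_I₁ hq' t).differentiableAt)
    (fun t => (hasDerivAt_I₁ hq' t).deriv) s t

theorem I₂_eq (hq : ∀ t, HasDerivAt q (q' t) t)
    (hq' : ∀ t, HasDerivAt q' (F - 2 * γ * q' t) t) (s t : ℝ) :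
    I₂ γ F q q' s = I₂ γ F q q' t :=
  is_const_of_deriv_eq_zero (fun t => (hasDerivAt_I₂ hq hq' t).differentiableAt)
    (fun t => (hasDerivAt_I₂ hq hq' t).deriv) s t

end DampedLinearMotion

theorem I7_const_general (γ F : ℝ) (q q' : ℝ → ℝ)
    (hq : ∀ t, HasDerivAt q (q' t) t)
    (hq' : ∀ t, HasDerivAt q' (F - 2 * γ * q' t) t)
    (a b : ℝ) :
    ∀ s ∈ Set.Icc a b, ∀ t ∈ Set.Icc a b,
      ((1 / (2 * γ)) * (2 * γ * q' s - F) * Real.exp (2 * γ * s)) /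
          (2 * γ * (F * s - 2 * γ * q s - q' s) + F) =
      ((1 / (2 * γ)) * (2 * γ * q' t - F) * Real.exp (2 * γ * t)) /
          (2 * γ * (F * t - 2 * γ * q t - q' t) + F) := by
  intro s _ t _
  change DampedLinearMotion.I₁ γ F q' s / (2 * γ * DampedLinearMotion.I₂ γ F q q' s + F) =
    DampedLinearMotion.I₁ γ F q' t / (2 * γ * DampedLinearMotion.I₂ γ F q q' t + F)
  rw [DampedLinearMotion.I₁_eq hq' s t, DampedLinearMotion.I₂_eq hq hq' s t]

/-- For damped motion under a constant force, on any interval where `2γ I₂ + F ≠ 0`,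
`I₇ = I₁ / (2γ I₂ + F)` is constant. -/
theorem I7_const (γ F : ℝ) (hγ : γ ≠ 0) (q q' : ℝ → ℝ)
    (hq : ∀ t, HasDerivAt q (q' t) t)
    (hq' : ∀ t, HasDerivAt q' (F - 2 * γ * q' t) t)
    (a b : ℝ)
    (hne : ∀ t ∈ Set.Icc a b, 2 * γ * (F * t - 2 * γ * q t - q' t) + F ≠ 0) :
    ∀ s ∈ Set.Icc a b, ∀ t ∈ Set.Icc a b,
      ((1 / (2 * γ)) * (2 * γ * q' s - F) * Real.exp (2 * γ * s)) /
          (2 * γ * (F * s - 2 * γ * q s - q' s) + F) =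
      ((1 / (2 * γ)) * (2 * γ * q' t - F) * Real.exp (2 * γ * t)) /
          (2 * γ * (F * t - 2 * γ * q t - q' t) + F) :=
  I7_const_general γ F q q' hq hq' a b
end

section
/- Let γ, A be real constants and let q : ℝ → ℝ be twice differentiable with q(t) > 0 and q''(t) = -A/q(t) - 2γ q'(t) for all t. Then the function I(t) = ½(q'(t) + 2γ q(t))² + A·log(q(t)) + 2γ A t is constant. -/
/-! Along a solution, `d/dt ½(q' + 2γq)² = (q' + 2γq)(-A/q)`, which cancels against
`d/dt (A log q) = A q'/q` up to the constant `-2γA`; the term `2γAt` removes that constant. -/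

noncomputable def logPotentialIntegral (γ A : ℝ) (q q' : ℝ → ℝ) (t : ℝ) : ℝ :=
  (1 / 2) * (q' t + 2 * γ * q t) ^ 2 + A * Real.log (q t) + 2 * γ * A * t

theorem hasDerivAt_logPotentialIntegral {γ A t : ℝ} {q q' : ℝ → ℝ} (hqt : q t ≠ 0)
    (hq : HasDerivAt q (q' t) t) (hq' : HasDerivAt q' (-A / q t - 2 * γ * q' t) t) :
    HasDerivAt (logPotentialIntegral γ A q q') 0 t := by
  have hsum : HasDerivAt (fun t => q' t + 2 * γ * q t) (-A / q t) t :=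
    (hq'.add (hq.const_mul (2 * γ))).congr_deriv (by ring)
  have hlog : HasDerivAt (fun t => Real.log (q t)) (q' t / q t) t := hq.log hqt
  refine (((hsum.pow 2).const_mul (1 / 2)).add (hlog.const_mul A) |>.add
    ((hasDerivAt_id t).const_mul (2 * γ * A))).congr_deriv ?_
  field_simp
  ring

/-- For damped motion in the logarithmic potential `V₁(q) = A log q`,
`I = ½(q' + 2γq)² + A log q + 2γAt` is constant. -/
theorem I_log_potential_const (γ A : ℝ) (q q' : ℝ → ℝ)
    (hpos : ∀ t, q t > 0)
    (hq : ∀ t, HasDerivAt q (q' t) t)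
    (hq' : ∀ t, HasDerivAt q' (-A / q t - 2 * γ * q' t) t) :
    ∀ s t : ℝ,
      (1 / 2) * (q' s + 2 * γ * q s) ^ 2 + A * Real.log (q s) + 2 * γ * A * s =
      (1 / 2) * (q' t + 2 * γ * q t) ^ 2 + A * Real.log (q t) + 2 * γ * A * t := by
  have hI : ∀ t, HasDerivAt (logPotentialIntegral γ A q q') 0 t := fun t =>
    hasDerivAt_logPotentialIntegral (hpos t).ne' (hq t) (hq' t)
  exact is_const_of_deriv_eq_zero (fun t => (hI t).differentiableAt) fun t => (hI t).deriv
end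

section
/- Let γ, A, α be real constants with α ∉ {-2, 0}, and let q : ℝ → ℝ be twice differentiable with q(t) > 0 and q''(t) = -Aα·q(t)^{α-1} - (8γ²α/(α+2)²)·q(t) - 2γ q'(t) for all t. Then I(t) = (½(q'(t) + (4γ/(α+2))q(t))² + A·q(t)^α)·exp(4γα t/(α+2)) is constant. -/
/-!
Put `p = q' + κ q` with `κ = 4γ/(α+2)` and `ν = 4γα/(α+2) = κα`. The equation of motion becomes
`p' = -V'(q) - (ν/2) p` for `V(q) = A q^α`, so the derivative of `(½p² + V(q)) e^{νt}` is
`e^{νt} (ν V(q) - κ q V'(q))`, which vanishes because `V` is homogeneous of degree `α`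
(Euler's relation `q V'(q) = α V(q)`).
-/

open Real

theorem weightedEnergy_const {q p V V' : ℝ → ℝ} {κ ν : ℝ}
    (hq : ∀ t, HasDerivAt q (p t - κ * q t) t)
    (hp : ∀ t, HasDerivAt p (-V' (q t) - ν / 2 * p t) t)
    (hV : ∀ t, HasDerivAt V (V' (q t)) (q t))
    (hEuler : ∀ t, ν * V (q t) = κ * q t * V' (q t)) (s t : ℝ) :
    (1 / 2 * p s ^ 2 + V (q s)) * exp (ν * s) = (1 / 2 * p t ^ 2 + V (q t)) * exp (ν * t) := by
  have hderiv : ∀ t, HasDerivAt (fun t => (1 / 2 * p t ^ 2 + V (q t)) * exp (ν * t)) 0 t := by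
    intro t
    have hexp : HasDerivAt (fun t => exp (ν * t)) (exp (ν * t) * ν) t := by
      simpa using ((hasDerivAt_id t).const_mul ν).exp
    refine ((((hp t).pow 2).const_mul (1 / 2)).add ((hV t).comp t (hq t))).mul hexp
      |>.congr_deriv ?_
    simp only [Pi.add_apply, Function.comp_apply, Pi.pow_apply, Nat.cast_ofNat]
    linear_combination exp (ν * t) * hEuler t
  exact is_const_of_deriv_eq_zero (fun t => (hderiv t).differentiableAt)
    (fun t => (hderiv t).deriv) s t

theorem hasDerivAt_mul_rpow_const {A α x : ℝ} (hx : 0 < x) :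
    HasDerivAt (fun x => A * x ^ α) (A * α * x ^ (α - 1)) x := by
  simpa [mul_assoc] using (hasDerivAt_rpow_const (p := α) (Or.inl hx.ne')).const_mul A

theorem I_power_potential_const_general (γ A α : ℝ) (hα2 : α ≠ -2)
    (q q' : ℝ → ℝ)
    (hpos : ∀ t, q t > 0)
    (hq : ∀ t, HasDerivAt q (q' t) t)
    (hq' : ∀ t, HasDerivAt q'
      (-(A * α) * q t ^ (α - 1) - (8 * γ ^ 2 * α / (α + 2) ^ 2) * q t - 2 * γ * q' t) t) :
    ∀ s t : ℝ,
      ((1 / 2) * (q' s + (4 * γ / (α + 2)) * q s) ^ 2 + A * q s ^ α) *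
          Real.exp (4 * γ * α * s / (α + 2)) =
      ((1 / 2) * (q' t + (4 * γ / (α + 2)) * q t) ^ 2 + A * q t ^ α) *
          Real.exp (4 * γ * α * t / (α + 2)) := by
  have hα2' : α + 2 ≠ 0 := fun h => hα2 (by linarith)
  have hrate : ∀ x, 4 * γ * α * x / (α + 2) = 4 * γ * α / (α + 2) * x := fun x => by ring
  intro s t
  simp only [hrate]
  refine weightedEnergy_const (κ := 4 * γ / (α + 2))
    (p := fun t => q' t + 4 * γ / (α + 2) * q t) (V := fun x => A * x ^ α)
    (V' := fun x => A * α * x ^ (α - 1)) ?_ ?_ (fun t => hasDerivAt_mul_rpow_const (hpos t)) ?_ s t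
  · intro t
    simpa using hq t
  · intro t
    refine ((hq' t).add ((hq t).const_mul (4 * γ / (α + 2)))).congr_deriv ?_
    field_simp
    ring
  · intro t
    have hqt := (hpos t).ne'
    rw [rpow_sub_one hqt]
    field_simp

/-- For damped motion in the potential `V₂(q) = A q^α + (4γ²α/(α+2)²) q²`,
`I = (½(q' + (4γ/(α+2))q)² + A q^α) e^{4γαt/(α+2)}` is constant. -/
theorem I_power_potential_const (γ A α : ℝ) (hα2 : α ≠ -2) (hα0 : α ≠ 0)
    (q q' : ℝ → ℝ)
    (hpos : ∀ t, q t > 0)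
    (hq : ∀ t, HasDerivAt q (q' t) t)
    (hq' : ∀ t, HasDerivAt q'
      (-(A * α) * q t ^ (α - 1) - (8 * γ ^ 2 * α / (α + 2) ^ 2) * q t - 2 * γ * q' t) t) :
    ∀ s t : ℝ,
      ((1 / 2) * (q' s + (4 * γ / (α + 2)) * q s) ^ 2 + A * q s ^ α) *
          Real.exp (4 * γ * α * s / (α + 2)) =
      ((1 / 2) * (q' t + (4 * γ / (α + 2)) * q t) ^ 2 + A * q t ^ α) *
          Real.exp (4 * γ * α * t / (α + 2)) :=
  I_power_potential_const_general γ A α hα2 q q' hpos hq hq'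
end

section
/- Let γ, A be real constants and let q : ℝ → ℝ be twice differentiable with q''(t) = -A·exp(q(t)) - 8γ² - 2γ q'(t) for all t. Then the function I(t) = (½(q'(t) + 4γ)² + A·exp(q(t)))·exp(4γ t) is constant. -/
open Real

theorem mul_exp_eq_of_hasDerivAt_neg_mul {E : ℝ → ℝ} {c : ℝ}
    (hE : ∀ t, HasDerivAt E (-c * E t) t) (s t : ℝ) :
    E s * exp (c * s) = E t * exp (c * t) := by
  have hderiv : ∀ t, HasDerivAt (fun t => E t * exp (c * t)) 0 t := fun t => by
    have hexp : HasDerivAt (fun t => exp (c * t)) (exp (c * t) * c) t := by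
      simpa using ((hasDerivAt_id t).const_mul c).exp
    exact ((hE t).mul hexp).congr_deriv (by ring)
  exact is_const_of_deriv_eq_zero (fun t => (hderiv t).differentiableAt)
    (fun t => (hderiv t).deriv) s t

-- The non-exponential part of the force, `-8γ² - 2γq'`, is `-2γ(q' + 4γ)`.
theorem hasDerivAt_shifted_energy {γ A : ℝ} {q q' : ℝ → ℝ}
    (hq : ∀ t, HasDerivAt q (q' t) t)
    (hq' : ∀ t, HasDerivAt q' (-A * exp (q t) - 8 * γ ^ 2 - 2 * γ * q' t) t) (t : ℝ) :
    HasDerivAt (fun t => (1 / 2) * (q' t + 4 * γ) ^ 2 + A * exp (q t))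
      (-(4 * γ) * ((1 / 2) * (q' t + 4 * γ) ^ 2 + A * exp (q t))) t := by
  have hkinetic := (((hq' t).add_const (4 * γ)).pow 2).const_mul (1 / 2)
  have hpotential := ((hasDerivAt_exp (q t)).comp t (hq t)).const_mul A
  exact (hkinetic.add hpotential).congr_deriv (by push_cast; ring)

/-- For damped motion in the potential `V₃(q) = A e^q + 8γ² q`,
`I = (½(q' + 4γ)² + A e^q) e^{4γt}` is constant. -/
theorem I_exp_potential_const (γ A : ℝ) (q q' : ℝ → ℝ)
    (hq : ∀ t, HasDerivAt q (q' t) t)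
    (hq' : ∀ t, HasDerivAt q' (-A * Real.exp (q t) - 8 * γ ^ 2 - 2 * γ * q' t) t) :
    ∀ s t : ℝ,
      ((1 / 2) * (q' s + 4 * γ) ^ 2 + A * Real.exp (q s)) * Real.exp (4 * γ * s) =
      ((1 / 2) * (q' t + 4 * γ) ^ 2 + A * Real.exp (q t)) * Real.exp (4 * γ * t) :=
  mul_exp_eq_of_hasDerivAt_neg_mul (hasDerivAt_shifted_energy hq hq')
end

section
/- Let γ ≠ 0 be a real constant, V : ℝ → ℝ differentiable, and q : ℝ → ℝ twice differentiable satisfying q''(t) = -V'(q(t)) - 2γ q'(t). Let H(t) = ½q'(t)² + V(q(t)) denote the mechanical energy and A(t) = ∫₀ᵗ (½q'(s)² - V(q(s)))·exp(2γs) ds the BCK action. Then the function 𝓘(t) = H(t)·exp(2γt) + 2γ·A(t) is constant. -/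
/-! Along the damped flow the energy decays as `dH/dt = -2γ q'²`, so `d/dt (H e^{2γt})
= (-2γ q'² + 2γ H) e^{2γt} = -2γ L_BCK`. Hence `H e^{2γt}` plus `2γ` times a primitive of
`L_BCK` has zero derivative and is constant. -/

open Real

theorem add_smul_integral_eq_of_hasDerivAt {E : Type*} [NormedAddCommGroup E] [NormedSpace ℝ E]
    [CompleteSpace E] {f g : ℝ → E} (c : ℝ) (hg : Continuous g)
    (hf : ∀ t, HasDerivAt f (-(c • g t)) t) (a s t : ℝ) :
    f s + c • ∫ u in a..s, g u = f t + c • ∫ u in a..t, g u := by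
  have hderiv : ∀ t, HasDerivAt (fun t => f t + c • ∫ u in a..t, g u) 0 t := fun t =>
    ((hf t).add ((hg.integral_hasStrictDerivAt a t).hasDerivAt.const_smul c)).congr_deriv
      (neg_add_cancel _)
  exact is_const_of_deriv_eq_zero (fun t => (hderiv t).differentiableAt)
    (fun t => (hderiv t).deriv) s t

theorem hasDerivAt_energy {V q q' : ℝ → ℝ} {v a t : ℝ} (hV : HasDerivAt V v (q t))
    (hq : HasDerivAt q (q' t) t) (hq' : HasDerivAt q' a t) :
    HasDerivAt (fun t => 1 / 2 * q' t ^ 2 + V (q t)) (q' t * (a + v)) t :=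
  (((hq'.pow 2).const_mul (1 / 2)).add (hV.comp t hq)).congr_deriv (by push_cast; ring)

theorem hasDerivAt_energy_mul_exp_of_damped {γ : ℝ} {V V' q q' : ℝ → ℝ} {t : ℝ}
    (hV : HasDerivAt V (V' (q t)) (q t)) (hq : HasDerivAt q (q' t) t)
    (hq' : HasDerivAt q' (-V' (q t) - 2 * γ * q' t) t) :
    HasDerivAt (fun t => (1 / 2 * q' t ^ 2 + V (q t)) * exp (2 * γ * t))
      (-(2 * γ * ((1 / 2 * q' t ^ 2 - V (q t)) * exp (2 * γ * t)))) t := by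
  have hexp : HasDerivAt (fun t => exp (2 * γ * t)) (exp (2 * γ * t) * (2 * γ)) t :=
    ((hasDerivAt_id t).const_mul (2 * γ)).exp.congr_deriv (by simp)
  exact ((hasDerivAt_energy hV hq hq').mul hexp).congr_deriv (by ring)

theorem weak_noether_bck_action_general (γ : ℝ) (V V' q q' : ℝ → ℝ)
    (hV : ∀ x, HasDerivAt V (V' x) x)
    (hq : ∀ t, HasDerivAt q (q' t) t)
    (hq' : ∀ t, HasDerivAt q' (-V' (q t) - 2 * γ * q' t) t) :
    ∀ s t : ℝ,
      ((1 / 2) * (q' s) ^ 2 + V (q s)) * Real.exp (2 * γ * s) +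
          2 * γ * ∫ u in (0 : ℝ)..s, ((1 / 2) * (q' u) ^ 2 - V (q u)) * Real.exp (2 * γ * u) =
      ((1 / 2) * (q' t) ^ 2 + V (q t)) * Real.exp (2 * γ * t) +
          2 * γ * ∫ u in (0 : ℝ)..t, ((1 / 2) * (q' u) ^ 2 - V (q u)) * Real.exp (2 * γ * u) := by
  have hqc : Continuous q := continuous_iff_continuousAt.2 fun t => (hq t).continuousAt
  have hq'c : Continuous q' := continuous_iff_continuousAt.2 fun t => (hq' t).continuousAt
  have hVc : Continuous V := continuous_iff_continuousAt.2 fun x => (hV x).continuousAt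
  exact add_smul_integral_eq_of_hasDerivAt (2 * γ) (by fun_prop)
    (fun t => hasDerivAt_energy_mul_exp_of_damped (hV (q t)) (hq t) (hq' t)) 0

/-- Weak Noether theorem for the BCK Lagrangian: along solutions of the damped Newton equation,
`𝓘(t) = H(t) e^{2γt} + 2γ ∫₀ᵗ L_BCK` is constant, where `H = ½ q'² + V(q)`. -/
theorem weak_noether_bck_action (γ : ℝ) (hγ : γ ≠ 0) (V V' q q' : ℝ → ℝ)
    (hV : ∀ x, HasDerivAt V (V' x) x)
    (hq : ∀ t, HasDerivAt q (q' t) t)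
    (hq' : ∀ t, HasDerivAt q' (-V' (q t) - 2 * γ * q' t) t) :
    ∀ s t : ℝ,
      ((1 / 2) * (q' s) ^ 2 + V (q s)) * Real.exp (2 * γ * s) +
          2 * γ * ∫ u in (0 : ℝ)..s, ((1 / 2) * (q' u) ^ 2 - V (q u)) * Real.exp (2 * γ * u) =
      ((1 / 2) * (q' t) ^ 2 + V (q t)) * Real.exp (2 * γ * t) +
          2 * γ * ∫ u in (0 : ℝ)..t, ((1 / 2) * (q' u) ^ 2 - V (q u)) * Real.exp (2 * γ * u) :=
  weak_noether_bck_action_general γ V V' q q' hV hq hq'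
end

section
/- Let γ ≠ 0, F ∈ ℝ, and let q : ℝ → ℝ satisfy q''(t) = F - 2γq'(t). Define I₁(t) = (1/(2γ))(2γq'(t) - F)e^{2γt}. Then the function I₃(t) = γ·I₁(t)² is constant, and it equals the Noether first integral generated by X₃ = e^{2γt}(2γ∂_t + F∂_q) with divergence term f₃ = (F/(4γ))(8γ²q + F)e^{4γt}: namely γI₁² = f₃ - 2γe^{2γt}·L - (∂L/∂q')·e^{2γt}(F - 2γq'), where L = (½q'² + Fq)e^{2γt}. -/
open Real

theorem hasDerivAt_linear_sub_mul_exp {k c : ℝ} {v : ℝ → ℝ}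
    (hv : ∀ t, HasDerivAt v (c - k * v t) t) (t : ℝ) :
    HasDerivAt (fun t => (k * v t - c) * exp (k * t)) 0 t := by
  have hexp : HasDerivAt (fun t => exp (k * t)) (exp (k * t) * k) t :=
    (hasDerivAt_exp (k * t)).comp t ((hasDerivAt_id t).const_mul k |>.congr_deriv (mul_one k))
  exact (((hv t).const_mul k).sub_const c).mul hexp |>.congr_deriv (by ring)

theorem linear_sub_mul_exp_eq {k c : ℝ} {v : ℝ → ℝ}
    (hv : ∀ t, HasDerivAt v (c - k * v t) t) (s t : ℝ) :
    (k * v s - c) * exp (k * s) = (k * v t - c) * exp (k * t) :=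
  is_const_of_deriv_eq_zero (fun x => (hasDerivAt_linear_sub_mul_exp hv x).differentiableAt)
    (fun x => (hasDerivAt_linear_sub_mul_exp hv x).deriv) s t

/-- The Noether identity at a single instant, with `x = q`, `y = q'` and `e = e^{2γt}`. -/
theorem noether_identity {γ : ℝ} (hγ : γ ≠ 0) (F x y e : ℝ) :
    γ * ((1 / (2 * γ)) * (2 * γ * y - F) * e) ^ 2 =
      (F / (4 * γ)) * (8 * γ ^ 2 * x + F) * e ^ 2
        - 2 * γ * e * (((1 / 2) * y ^ 2 + F * x) * e) - (y * e) * (e * (F - 2 * γ * y)) := by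
  field_simp
  ring

theorem I3_const_and_noether_general (γ F : ℝ) (hγ : γ ≠ 0) (q q' : ℝ → ℝ)
    (hq' : ∀ t, HasDerivAt q' (F - 2 * γ * q' t) t) :
    (∀ s t : ℝ,
      γ * ((1 / (2 * γ)) * (2 * γ * q' s - F) * Real.exp (2 * γ * s)) ^ 2 =
      γ * ((1 / (2 * γ)) * (2 * γ * q' t - F) * Real.exp (2 * γ * t)) ^ 2) ∧
    (∀ t : ℝ,
      γ * ((1 / (2 * γ)) * (2 * γ * q' t - F) * Real.exp (2 * γ * t)) ^ 2 =
        (F / (4 * γ)) * (8 * γ ^ 2 * q t + F) * Real.exp (4 * γ * t)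
          - 2 * γ * Real.exp (2 * γ * t) *
              (((1 / 2) * (q' t) ^ 2 + F * q t) * Real.exp (2 * γ * t))
          - (q' t * Real.exp (2 * γ * t)) * (Real.exp (2 * γ * t) * (F - 2 * γ * q' t))) := by
  refine ⟨fun s t => ?_, fun t => ?_⟩
  · rw [mul_assoc (1 / (2 * γ)), mul_assoc (1 / (2 * γ)), linear_sub_mul_exp_eq hq' s t]
  · have hexp : exp (4 * γ * t) = exp (2 * γ * t) ^ 2 := by
      rw [← exp_nat_mul]
      ring_nf
    rw [hexp]
    exact noether_identity hγ F (q t) (q' t) _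

/-- For damped motion under a constant force, `I₃ = γ I₁²` is constant and equals the Noether
first integral generated by `X₃ = e^{2γt}(2γ∂_t + F∂_q)` with divergence term
`f₃ = (F/(4γ))(8γ²q + F)e^{4γt}`. -/
theorem I3_const_and_noether (γ F : ℝ) (hγ : γ ≠ 0) (q q' : ℝ → ℝ)
    (hq : ∀ t, HasDerivAt q (q' t) t)
    (hq' : ∀ t, HasDerivAt q' (F - 2 * γ * q' t) t) :
    (∀ s t : ℝ,
      γ * ((1 / (2 * γ)) * (2 * γ * q' s - F) * Real.exp (2 * γ * s)) ^ 2 =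
      γ * ((1 / (2 * γ)) * (2 * γ * q' t - F) * Real.exp (2 * γ * t)) ^ 2) ∧
    (∀ t : ℝ,
      γ * ((1 / (2 * γ)) * (2 * γ * q' t - F) * Real.exp (2 * γ * t)) ^ 2 =
        (F / (4 * γ)) * (8 * γ ^ 2 * q t + F) * Real.exp (4 * γ * t)
          - 2 * γ * Real.exp (2 * γ * t) *
              (((1 / 2) * (q' t) ^ 2 + F * q t) * Real.exp (2 * γ * t))
          - (q' t * Real.exp (2 * γ * t)) * (Real.exp (2 * γ * t) * (F - 2 * γ * q' t))) :=
  I3_const_and_noether_general γ F hγ q q' hq'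
end
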